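/- arXiv:1603.09736 — 4 statements merged into one kernel-verified Lean document; each statement's English description precedes it below -/
import Mathlib

section
/- Let A be a bounded positive definite self-adjoint operator on a Hilbert space H and let P be an orthogonal projection on H. Then P (PAP|_{ran P})^{-1} P ≤ P A^{-1} P as quadratic forms, i.e., for all u ∈ ran P, ⟨u, (PAP|_{ran P})^{-1} u⟩ ≤ ⟨u, A^{-1} u⟩. -/
open scoped InnerProductSpace

/-!
With `u ∈ ran P`, put `x = B u` and `y = A⁻¹ u`. Since `x ∈ ran P` and `P A x = u`, the vector `x`
is the Galerkin approximation of `y` in `ran P`, so `⟪x, A x⟫ = ⟪x, u⟫ = ⟪x, A y⟫`. Expanding the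
energy of the error gives `0 ≤ ⟪y - x, A (y - x)⟫ = ⟪y, u⟫ - ⟪x, u⟫` (real parts), and these are
the conjugates of `⟪u, A⁻¹ u⟫` and `⟪u, B u⟫`.
-/

section Galerkin

open RCLike

variable {𝕜 E : Type*} [RCLike 𝕜] [NormedAddCommGroup E] [InnerProductSpace 𝕜 E]

theorem LinearMap.IsSymmetric.re_inner_sub_map_sub {A : E →ₗ[𝕜] E} (hA : A.IsSymmetric)
    (x y : E) :
    re ⟪y - x, A (y - x)⟫_𝕜 = re ⟪y, A y⟫_𝕜 - 2 * re ⟪x, A y⟫_𝕜 + re ⟪x, A x⟫_𝕜 := by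
  have hsymm : re ⟪y, A x⟫_𝕜 = re ⟪x, A y⟫_𝕜 := by
    rw [← hA, inner_re_symm]
  simp only [map_sub, inner_sub_left, inner_sub_right, hsymm]
  ring

theorem LinearMap.IsSymmetric.re_inner_le_of_re_inner_map_self_eq {A : E →ₗ[𝕜] E}
    (hA : A.IsSymmetric) (hA_nonneg : ∀ v, 0 ≤ re ⟪v, A v⟫_𝕜) {u x y : E} (hy : A y = u)
    (hx : re ⟪x, A x⟫_𝕜 = re ⟪x, u⟫_𝕜) :
    re ⟪x, u⟫_𝕜 ≤ re ⟪y, u⟫_𝕜 := by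
  have henergy := hA.re_inner_sub_map_sub x y
  rw [hy, hx] at henergy
  linarith [hA_nonneg (y - x)]

end Galerkin

theorem proj_inv_proj_le_general {H : Type*} [NormedAddCommGroup H] [InnerProductSpace ℂ H]
    [CompleteSpace H] (A A' P B : H →L[ℂ] H)
    (hA : IsSelfAdjoint A) (c : ℝ) (hc : 0 < c)
    (hcoer : ∀ u : H, c * ‖u‖ ^ 2 ≤ (⟪u, A u⟫_ℂ).re)
    (hAA' : A ∘L A' = 1)
    (hP : IsSelfAdjoint P)
    (hBran : P ∘L B ∘L P = B)
    (hinv1 : (P ∘L A ∘L P) ∘L B = P) :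
    ∀ u : H, P u = u → (⟪u, B u⟫_ℂ).re ≤ (⟪u, A' u⟫_ℂ).re := by
  intro u hu
  have hBu : P (B u) = B u := by
    simpa [hu] using congr($hBran u)
  have hAA'u : A (A' u) = u := by
    simpa using congr($hAA' u)
  have hPABu : P (A (B u)) = u := by
    simpa [hu, hBu] using congr($hinv1 u)
  have hgalerkin : ⟪B u, A (B u)⟫_ℂ = ⟪B u, u⟫_ℂ := by
    calc ⟪B u, A (B u)⟫_ℂ = ⟪P (B u), A (B u)⟫_ℂ := by rw [hBu]
      _ = ⟪B u, P (A (B u))⟫_ℂ := hP.isSymmetric _ _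
      _ = ⟪B u, u⟫_ℂ := by rw [hPABu]
  have hA_nonneg (v : H) : 0 ≤ (⟪v, A v⟫_ℂ).re := (by positivity : 0 ≤ c * ‖v‖ ^ 2).trans (hcoer v)
  have hcompare :=
    hA.isSymmetric.re_inner_le_of_re_inner_map_self_eq hA_nonneg hAA'u (congrArg _ hgalerkin)
  rwa [inner_re_symm (B u), inner_re_symm (A' u)] at hcompare

/-- If `A` is a bounded positive definite self-adjoint operator with inverse `A'`, `P` an
orthogonal projection, and `B` the inverse of `PAP` restricted to `ran P` (i.e. `B` maps into
`ran P` and inverts `PAP` there), then `P (PAP|_{ran P})⁻¹ P ≤ P A⁻¹ P` as quadratic forms: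
for all `u ∈ ran P`, `⟨u, B u⟩ ≤ ⟨u, A' u⟩`. -/
theorem proj_inv_proj_le {H : Type*} [NormedAddCommGroup H] [InnerProductSpace ℂ H]
    [CompleteSpace H] (A A' P B : H →L[ℂ] H)
    (hA : IsSelfAdjoint A) (c : ℝ) (hc : 0 < c)
    (hcoer : ∀ u : H, c * ‖u‖ ^ 2 ≤ (⟪u, A u⟫_ℂ).re)
    (hAA' : A ∘L A' = 1) (hA'A : A' ∘L A = 1)
    (hP : IsSelfAdjoint P) (hP2 : P ∘L P = P)
    (hBself : IsSelfAdjoint B) (hBran : P ∘L B ∘L P = B)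
    (hinv1 : (P ∘L A ∘L P) ∘L B = P) (hinv2 : B ∘L (P ∘L A ∘L P) = P) :
    ∀ u : H, P u = u → (⟪u, B u⟫_ℂ).re ≤ (⟪u, A' u⟫_ℂ).re :=
  proj_inv_proj_le_general A A' P B hA c hc hcoer hAA' hP hBran hinv1
end

section
/- Let f_l(μ) = Σ_n (e_n - μ)_- for a nondecreasing sequence 0 ≤ e_1 ≤ e_2 ≤ … tending to infinity, and f_r(μ) = C μ^{1+d/(2s)} for μ > 0 with constant C = L^cl_{1,d,s}|Ω|. Then the inequality f_l(μ) ≤ f_r(μ) for all μ > 0 is equivalent to the inequality Σ_{n=1}^N e_n ≥ C' N^{1+2s/d} for all N ∈ ℕ, where C' = (d/(d+2s)) (2π)^{2s} ω_d^{-2s/d} |Ω|^{-2s/d}, via Legendre duality: the Legendre transforms of the convex functions f_l and f_r are respectively the piecewise linear interpolation of N ↦ Σ_{n=1}^N e_n and ν ↦ C' ν^{1+2s/d}, and the Legendre transform reverses inequalities between convex functions. -/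
open MeasureTheory Real

/-
The Riesz mean `F(μ) = ∑ₙ (μ - eₙ)₊` is the Legendre transform of the piecewise linear
interpolation of `N ↦ ∑_{n<N} eₙ`: for every `N`, `F(μ) ≥ Nμ - ∑_{n<N} eₙ` and equality holds for
`N = #{n | eₙ < μ}`. The power law `G(μ) = K/(1+c) μ^(1+c)` has Legendre transform
`G*(ν) = c/(c+1) K^(-1/c) ν^(1+1/c)`, the supremum of `νμ - G(μ)` being attained at
`μ = (ν/K)^(1/c)`. Hence `F ≤ G` gives `∑_{n<N} eₙ ≥ Nμ - F(μ) ≥ Nμ - G(μ) = G*(N)` at the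
maximizing `μ`, and conversely `∑_{n<N} eₙ ≥ G*(N)` gives `F(μ) = Nμ - ∑_{n<N} eₙ ≤ Nμ - G*(N) ≤ G(μ)`
by the Fenchel–Young inequality. With `c = d/(2s)` and `K = ω_d |Ω| / (2π)^d` this is the theorem.
-/

open Finset Filter

section RieszMean

variable {e : ℕ → ℝ}

lemma summable_max_sub_of_tendsto_atTop (htop : Tendsto e atTop atTop) (μ : ℝ) :
    Summable fun n => max (μ - e n) 0 := by
  obtain ⟨M, hM⟩ := (htop.eventually_ge_atTop μ).exists_forall_of_atTop
  refine summable_of_ne_finset_zero (s := range M) fun n hn => max_eq_right ?_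
  linarith [hM n (by simpa using hn)]

lemma sum_range_const_sub (μ : ℝ) (N : ℕ) :
    ∑ n ∈ range N, (μ - e n) = N * μ - ∑ n ∈ range N, e n := by
  rw [sum_sub_distrib, sum_const, card_range, nsmul_eq_mul]

lemma mul_sub_sum_range_le_tsum_max_sub (htop : Tendsto e atTop atTop) (μ : ℝ) (N : ℕ) :
    N * μ - ∑ n ∈ range N, e n ≤ ∑' n, max (μ - e n) 0 :=
  calc N * μ - ∑ n ∈ range N, e n = ∑ n ∈ range N, (μ - e n) := (sum_range_const_sub μ N).symm
    _ ≤ ∑ n ∈ range N, max (μ - e n) 0 := sum_le_sum fun _ _ => le_max_left _ _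
    _ ≤ ∑' n, max (μ - e n) 0 :=
      (summable_max_sub_of_tendsto_atTop htop μ).sum_le_tsum _ fun _ _ => le_max_right _ _

lemma exists_tsum_max_sub_eq (hmono : Monotone e) (htop : Tendsto e atTop atTop) (μ : ℝ) :
    ∃ N : ℕ, ∑' n, max (μ - e n) 0 = N * μ - ∑ n ∈ range N, e n := by
  classical
  have hex : ∃ n, μ ≤ e n := (htop.eventually_ge_atTop μ).exists
  refine ⟨Nat.find hex, ?_⟩
  have hzero : ∀ n ∉ range (Nat.find hex), max (μ - e n) 0 = 0 := fun n hn =>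
    max_eq_right <| sub_nonpos.mpr <| (Nat.find_spec hex).trans <| hmono <| by simpa using hn
  have hpos : ∀ n ∈ range (Nat.find hex), max (μ - e n) 0 = μ - e n := fun n hn =>
    max_eq_left <| sub_nonneg.mpr <| le_of_lt <| not_le.mp <| Nat.find_min hex <| by simpa using hn
  rw [tsum_eq_sum hzero, sum_congr rfl hpos, sum_range_const_sub]

end RieszMean

section PowerLaw

noncomputable def powerLaw (K c μ : ℝ) : ℝ := K / (1 + c) * μ ^ (1 + c)

/-- The Legendre transform of `powerLaw K c` on `[0, ∞)`. -/
noncomputable def powerLawConj (K c ν : ℝ) : ℝ := c / (c + 1) * K ^ (-(1 / c)) * ν ^ (1 + 1 / c)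

variable {K c : ℝ}

lemma powerLawConj_zero (hc : 0 < c) : powerLawConj K c 0 = 0 := by
  rw [powerLawConj, zero_rpow (by positivity), mul_zero]

lemma holderConjugate_one_add_one_add_inv (hc : 0 < c) : (1 + c).HolderConjugate (1 + 1 / c) := by
  rw [Real.holderConjugate_iff]
  refine ⟨by linarith, ?_⟩
  field_simp
  ring

lemma mul_le_powerLaw_add_powerLawConj (hc : 0 < c) (hK : 0 < K) {μ ν : ℝ} (hμ : 0 ≤ μ)
    (hν : 0 ≤ ν) : ν * μ ≤ powerLaw K c μ + powerLawConj K c ν := by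
  set k := K ^ (1 / (1 + c))
  have hk : 0 < k := rpow_pos_of_pos hK _
  have hy := young_inequality_of_nonneg (mul_nonneg hk.le hμ) (div_nonneg hν hk.le)
    (holderConjugate_one_add_one_add_inv hc)
  have hab : k * μ * (ν / k) = ν * μ := by field_simp
  have ha : (k * μ) ^ (1 + c) = K * μ ^ (1 + c) := by
    rw [mul_rpow hk.le hμ, ← rpow_mul hK.le, one_div_mul_cancel (by positivity), rpow_one]
  have hb : (ν / k) ^ (1 + 1 / c) = K ^ (-(1 / c)) * ν ^ (1 + 1 / c) := by
    rw [div_rpow hν hk.le, ← rpow_mul hK.le, div_eq_inv_mul, ← rpow_neg hK.le]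
    congr 2
    field_simp
    ring
  rw [hab, ha, hb] at hy
  calc ν * μ ≤ K * μ ^ (1 + c) / (1 + c) + K ^ (-(1 / c)) * ν ^ (1 + 1 / c) / (1 + 1 / c) := hy
    _ = powerLaw K c μ + powerLawConj K c ν := by
      rw [powerLaw, powerLawConj]
      field_simp

lemma mul_eq_powerLaw_add_powerLawConj (hc : 0 < c) (hK : 0 < K) {ν : ℝ} (hν : 0 ≤ ν) :
    ν * (ν / K) ^ (1 / c) = powerLaw K c ((ν / K) ^ (1 / c)) + powerLawConj K c ν := by
  have hνK : 0 ≤ ν / K := div_nonneg hν hK.le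
  have hpow : ((ν / K) ^ (1 / c)) ^ (1 + c) = (ν / K) ^ (1 / c) * (ν / K) := by
    rw [← rpow_mul hνK, mul_add, mul_one, one_div_mul_cancel hc.ne', rpow_add' hνK, rpow_one]
    positivity
  have hconj : ν ^ (1 + 1 / c) * K ^ (-(1 / c)) = ν * (ν / K) ^ (1 / c) := by
    rw [div_rpow hν hK.le, rpow_neg hK.le, rpow_add' hν (by positivity), rpow_one, div_eq_mul_inv]
    ring
  rw [powerLaw, powerLawConj, hpow, mul_assoc _ _ (ν ^ _), mul_comm _ (ν ^ _), hconj]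
  field_simp
  ring

end PowerLaw

theorem tsum_max_sub_le_powerLaw_iff {K c : ℝ} (hc : 0 < c) (hK : 0 < K) {e : ℕ → ℝ}
    (hmono : Monotone e) (htop : Tendsto e atTop atTop) :
    (∀ μ : ℝ, 0 < μ → ∑' n, max (μ - e n) 0 ≤ powerLaw K c μ) ↔
      ∀ N : ℕ, 1 ≤ N → powerLawConj K c N ≤ ∑ n ∈ range N, e n := by
  constructor
  · intro hberezin N hN
    have hNK : 0 < (N : ℝ) / K := div_pos (by exact_mod_cast hN) hK
    have hμ : 0 < ((N : ℝ) / K) ^ (1 / c) := rpow_pos_of_pos hNK _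
    have hopt := mul_eq_powerLaw_add_powerLawConj hc hK (Nat.cast_nonneg N)
    linarith [hberezin _ hμ, mul_sub_sum_range_le_tsum_max_sub htop (((N : ℝ) / K) ^ (1 / c)) N]
  · intro hliYau μ hμ
    obtain ⟨N, hN⟩ := exists_tsum_max_sub_eq hmono htop μ
    have hconj : powerLawConj K c N ≤ ∑ n ∈ range N, e n := by
      rcases N.eq_zero_or_pos with rfl | hNpos
      · simp [powerLawConj_zero hc]
      · exact hliYau N hNpos
    linarith [mul_le_powerLaw_add_powerLawConj hc hK hμ.le (Nat.cast_nonneg N)]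

section Constants

variable {d s ω vol : ℝ}

lemma berezin_constant_eq (hd : 0 < d) (hs : 0 < s) :
    ω / (2 * π) ^ d * (Real.Gamma 2 * Real.Gamma (d / (2 * s) + 1) /
      Real.Gamma (1 + d / (2 * s) + 1)) * vol = (ω * vol / (2 * π) ^ d) / (1 + d / (2 * s)) := by
  have hΓ : Real.Gamma (1 + d / (2 * s) + 1) = (1 + d / (2 * s)) * Real.Gamma (d / (2 * s) + 1) := by
    rw [add_comm 1 (d / (2 * s)), Real.Gamma_add_one (by positivity)]
  have hΓpos : 0 < Real.Gamma (d / (2 * s) + 1) := Real.Gamma_pos_of_pos (by positivity)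
  rw [Real.Gamma_two, hΓ]
  field_simp

lemma liYau_constant_eq (hd : 0 < d) (hs : 0 < s) (hω : 0 < ω) (hvol : 0 < vol) :
    d / (d + 2 * s) * (2 * π) ^ (2 * s) * ω ^ (-(2 * s) / d) * vol ^ (-(2 * s) / d) =
      d / (2 * s) / (d / (2 * s) + 1) * (ω * vol / (2 * π) ^ d) ^ (-(1 / (d / (2 * s)))) := by
  have h2π : 0 < 2 * π := by positivity
  have hexp : -(1 / (d / (2 * s))) = -(2 * s) / d := by field_simp
  have h2πpow : ((2 * π) ^ d) ^ (-(2 * s) / d) = ((2 * π) ^ (2 * s))⁻¹ := by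
    rw [← rpow_mul h2π.le, ← rpow_neg h2π.le]
    congr 1
    field_simp
  rw [hexp, div_rpow (by positivity) (rpow_pos_of_pos h2π _).le, mul_rpow hω.le hvol.le,
    h2πpow]
  field_simp

end Constants

theorem berezin_iff_liYau_general (d : ℕ) (hd : 1 ≤ d) (s : ℝ) (hs0 : 0 < s)
    (vol : ℝ) (hvol : 0 < vol) (e : ℕ → ℝ) (hmono : Monotone e)
    (htop : Filter.Tendsto e Filter.atTop Filter.atTop) :
    (∀ μ : ℝ, 0 < μ →
        ∑' n : ℕ, max (μ - e n) 0 ≤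
          (π ^ ((d : ℝ) / 2) / Real.Gamma ((d : ℝ) / 2 + 1)) / (2 * π) ^ (d : ℝ) *
              (Real.Gamma 2 * Real.Gamma ((d : ℝ) / (2 * s) + 1) /
                Real.Gamma (1 + (d : ℝ) / (2 * s) + 1)) *
            vol * μ ^ (1 + (d : ℝ) / (2 * s))) ↔
      (∀ N : ℕ, 1 ≤ N →
        ∑ n ∈ Finset.range N, e n ≥
          (d : ℝ) / ((d : ℝ) + 2 * s) * (2 * π) ^ (2 * s) *
              (π ^ ((d : ℝ) / 2) / Real.Gamma ((d : ℝ) / 2 + 1)) ^ (-(2 * s) / (d : ℝ)) *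
            vol ^ (-(2 * s) / (d : ℝ)) * (N : ℝ) ^ (1 + 2 * s / (d : ℝ))) := by
  have hd0 : (0 : ℝ) < d := by exact_mod_cast hd
  have hω : 0 < π ^ ((d : ℝ) / 2) / Real.Gamma ((d : ℝ) / 2 + 1) :=
    div_pos (rpow_pos_of_pos pi_pos _) (Real.Gamma_pos_of_pos (by positivity))
  have hexp : 2 * s / (d : ℝ) = 1 / ((d : ℝ) / (2 * s)) := by field_simp
  rw [berezin_constant_eq hd0 hs0, liYau_constant_eq hd0 hs0 hω hvol, hexp]
  exact tsum_max_sub_le_powerLaw_iff (by positivity) (by positivity) hmono htop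

/-- Berezin–Li–Yau equivalence via Legendre duality: for a nondecreasing sequence
`0 ≤ e₁ ≤ e₂ ≤ … → ∞`, the Berezin-type bound
`Σ_n (e_n - μ)_- ≤ L^cl_{1,d,s} |Ω| μ^{1+d/(2s)}` for all `μ > 0` is equivalent to the
Li–Yau-type bound `Σ_{n=1}^N e_n ≥ (d/(d+2s)) (2π)^{2s} ω_d^{-2s/d} |Ω|^{-2s/d} N^{1+2s/d}`
for all `N ≥ 1`, where `ω_d = π^{d/2}/Γ(d/2+1)` and
`L^cl_{1,d,s} = (ω_d/(2π)^d) Γ(2) Γ(d/(2s)+1)/Γ(1+d/(2s)+1)`. -/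
theorem berezin_iff_liYau (d : ℕ) (hd : 1 ≤ d) (s : ℝ) (hs0 : 0 < s) (hs1 : s ≤ 1)
    (vol : ℝ) (hvol : 0 < vol) (e : ℕ → ℝ) (he0 : 0 ≤ e 0) (hmono : Monotone e)
    (htop : Filter.Tendsto e Filter.atTop Filter.atTop) :
    (∀ μ : ℝ, 0 < μ →
        ∑' n : ℕ, max (μ - e n) 0 ≤
          (π ^ ((d : ℝ) / 2) / Real.Gamma ((d : ℝ) / 2 + 1)) / (2 * π) ^ (d : ℝ) *
              (Real.Gamma 2 * Real.Gamma ((d : ℝ) / (2 * s) + 1) /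
                Real.Gamma (1 + (d : ℝ) / (2 * s) + 1)) *
            vol * μ ^ (1 + (d : ℝ) / (2 * s))) ↔
      (∀ N : ℕ, 1 ≤ N →
        ∑ n ∈ Finset.range N, e n ≥
          (d : ℝ) / ((d : ℝ) + 2 * s) * (2 * π) ^ (2 * s) *
              (π ^ ((d : ℝ) / 2) / Real.Gamma ((d : ℝ) / 2 + 1)) ^ (-(2 * s) / (d : ℝ)) *
            vol ^ (-(2 * s) / (d : ℝ)) * (N : ℝ) ^ (1 + 2 * s / (d : ℝ))) :=
  berezin_iff_liYau_general d hd s hs0 vol hvol e hmono htop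
end

section
/- (Garsia–Rodemich–Rumsey consequence) Let 1/2 < s < 1 and let φ be a continuous function on [a,b] such that the double integral ∫_a^b ∫_a^b |φ(x)-φ(y)|²/|x-y|^{1+2s} dx dy is finite. Then |φ(a)-φ(b)|² ≤ D_s (b-a)^{2s-1} ∫_a^b ∫_a^b |φ(x)-φ(y)|²/|x-y|^{1+2s} dx dy with D_s = (16(2s+1)/(2s-1))². -/
/-!
Average `φ` over the dyadic intervals `[a, a + 2⁻ⁿ(b - a)]` and `[b - 2⁻ⁿ(b - a), b]`: both chains
start at `[a, b]` and their averages converge to `φ a` and `φ b` by continuity. For intervals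
`J ⊆ K`, Jensen's inequality bounds `‖⨍_J φ - ⨍_K φ‖²` by the average of `‖φ x - φ y‖²` over
`J × K`, and `|x - y| ≤ |K|` there, so it is at most `|K| ^ (1 + 2s) / (|J| |K|)` times the
double integral. Along a halving chain these bounds decay geometrically with ratio `2^(1/2 - s)`,
and Bernoulli's inequality `2^(-t) ≤ 1 - t/2` turns the sum of the series into the constant.
-/

open MeasureTheory Filter Topology Set

section Average

variable {α β E : Type*} [MeasurableSpace α] [MeasurableSpace β]
  [NormedAddCommGroup E] [NormedSpace ℝ E]

theorem norm_average_sq_le [CompleteSpace E] {μ : Measure α} [IsFiniteMeasure μ] {g : α → E}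
    (hg : Integrable g μ) (hg2 : Integrable (fun x => ‖g x‖ ^ 2) μ) :
    ‖⨍ x, g x ∂μ‖ ^ 2 ≤ ⨍ x, ‖g x‖ ^ 2 ∂μ := by
  rcases eq_zero_or_neZero μ with rfl | _
  · simp
  exact ((convexOn_norm convex_univ).pow (fun x _ => norm_nonneg x) 2).map_average_le
    (continuous_norm.pow 2).continuousOn isClosed_univ (by simp) hg hg2

theorem average_sub_average_eq_average_prod {μ : Measure α} {ν : Measure β}
    [IsFiniteMeasure μ] [NeZero μ] [IsFiniteMeasure ν] [NeZero ν] {f : α → E} {g : β → E}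
    (hf : Integrable f μ) (hg : Integrable g ν) :
    ⨍ x, f x ∂μ - ⨍ y, g y ∂ν = ⨍ z, (f z.1 - g z.2) ∂μ.prod ν := by
  have hμ : μ.real univ ≠ 0 := measureReal_univ_ne_zero
  have hν : ν.real univ ≠ 0 := measureReal_univ_ne_zero
  have hμν : (μ.prod ν).real univ = μ.real univ * ν.real univ := by
    simp [measureReal_def, ← univ_prod_univ, Measure.prod_prod]
  rw [average_eq, average_eq, average_eq, integral_sub (hf.comp_fst ν) (hg.comp_snd μ),
    integral_fun_fst, integral_fun_snd, hμν, smul_sub, smul_smul, smul_smul]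
  congr 2 <;> field_simp

theorem ContinuousWithinAt.tendsto_setAverage [TopologicalSpace α] [CompleteSpace E]
    {μ : Measure α} {f : α → E} {S : Set α} {x : α} (hf : ContinuousWithinAt f S x)
    {ι : Type*} {l : Filter ι} {t : ι → Set α} (ht : Tendsto t l (𝓝 x).smallSets)
    (htS : ∀ i, t i ⊆ S) (hmeas : ∀ i, MeasurableSet (t i)) (h0 : ∀ i, μ (t i) ≠ 0)
    (hfin : ∀ i, μ (t i) ≠ ⊤) (hint : ∀ i, IntegrableOn f (t i) μ) :
    Tendsto (fun i => ⨍ y in t i, f y ∂μ) l (𝓝 (f x)) := by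
  refine Metric.nhds_basis_closedBall.tendsto_right_iff.2 fun ε hε => ?_
  have hnear : ∀ᶠ y in 𝓝 x, y ∈ S → f y ∈ Metric.closedBall (f x) ε :=
    eventually_nhdsWithin_iff.1 (hf (Metric.closedBall_mem_nhds _ hε))
  filter_upwards [ht.eventually (eventually_smallSets_forall.2 hnear)] with i hi
  exact (convex_closedBall _ _).set_average_mem Metric.isClosed_closedBall (h0 i) (hfin i)
    (ae_restrict_of_forall_mem (hmeas i) fun y hy => hi y hy (htS i hy)) (hint i)

end Average

theorem rpow_div_half_mul_self {h : ℝ} (hh : 0 < h) (s : ℝ) :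
    h ^ (1 + 2 * s) / (h / 2 * h) = 2 * (h ^ (s - 1 / 2)) ^ 2 := by
  rw [← Real.rpow_natCast, ← Real.rpow_mul hh.le,
    show 1 + 2 * s = 2 + (s - 1 / 2) * (2 : ℕ) by push_cast; ring,
    Real.rpow_add hh, Real.rpow_two]
  field_simp

theorem inv_two_rpow_le_one_sub_half_mul {t : ℝ} (ht0 : 0 ≤ t) (ht1 : t ≤ 1) :
    (2 : ℝ)⁻¹ ^ t ≤ 1 - t / 2 := by
  have := rpow_one_add_le_one_add_mul_self (s := -(1 / 2)) (by norm_num) ht0 ht1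
  norm_num at this
  linarith

theorem sq_two_mul_sqrt_mul_rpow_div_one_sub_le {s I L : ℝ} (hs : 1 / 2 < s) (hs1 : s < 1)
    (hI : 0 ≤ I) (hL : 0 < L) :
    (2 * (√(2 * I) * L ^ (s - 1 / 2) / (1 - 2⁻¹ ^ (s - 1 / 2)))) ^ 2 ≤
      (16 * (2 * s + 1) / (2 * s - 1)) ^ 2 * L ^ (2 * s - 1) * I := by
  have hgap : (2 * s - 1) / 4 ≤ 1 - 2⁻¹ ^ (s - 1 / 2) := by
    linarith [inv_two_rpow_le_one_sub_half_mul (t := s - 1 / 2) (by linarith) (by linarith)]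
  have hε : 0 < 2 * s - 1 := by linarith
  have hL2 : (L ^ (s - 1 / 2)) ^ 2 = L ^ (2 * s - 1) := by
    rw [← Real.rpow_natCast, ← Real.rpow_mul hL.le]
    ring_nf
  calc (2 * (√(2 * I) * L ^ (s - 1 / 2) / (1 - 2⁻¹ ^ (s - 1 / 2)))) ^ 2
      = 8 * (L ^ (2 * s - 1) * I) / (1 - 2⁻¹ ^ (s - 1 / 2)) ^ 2 := by
        rw [mul_pow, div_pow, mul_pow, Real.sq_sqrt (by positivity), hL2]
        ring
    _ ≤ 8 * (L ^ (2 * s - 1) * I) / ((2 * s - 1) / 4) ^ 2 := by gcongr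
    _ = 128 / (2 * s - 1) ^ 2 * (L ^ (2 * s - 1) * I) := by
        field_simp
        ring
    _ ≤ (16 * (2 * s + 1)) ^ 2 / (2 * s - 1) ^ 2 * (L ^ (2 * s - 1) * I) := by
        gcongr
        nlinarith
    _ = (16 * (2 * s + 1) / (2 * s - 1)) ^ 2 * L ^ (2 * s - 1) * I := by
        rw [div_pow]
        ring

/-- The integrand of the Gagliardo seminorm of `W^{s,2}`; on the diagonal it is `0 / 0 = 0`. -/
noncomputable def slobodeckijDensity {E : Type*} [NormedAddCommGroup E] (s : ℝ) (φ : ℝ → E)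
    (z : ℝ × ℝ) : ℝ :=
  ‖φ z.1 - φ z.2‖ ^ 2 / |z.1 - z.2| ^ (1 + 2 * s)

section Slobodeckij

variable {E : Type*} [NormedAddCommGroup E] {s a b : ℝ} {φ : ℝ → E}

theorem slobodeckijDensity_nonneg (z : ℝ × ℝ) : 0 ≤ slobodeckijDensity s φ z := by
  unfold slobodeckijDensity
  positivity

theorem norm_sub_sq_le_mul_slobodeckijDensity (hs : 0 ≤ 1 + 2 * s) {x y δ : ℝ}
    (hxy : |x - y| ≤ δ) : ‖φ x - φ y‖ ^ 2 ≤ δ ^ (1 + 2 * s) * slobodeckijDensity s φ (x, y) := by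
  rcases eq_or_ne x y with rfl | hne
  · simp [slobodeckijDensity]
  have hd : 0 < |x - y| ^ (1 + 2 * s) := by
    have := sub_ne_zero.2 hne
    positivity
  calc ‖φ x - φ y‖ ^ 2 = |x - y| ^ (1 + 2 * s) * slobodeckijDensity s φ (x, y) := by
        rw [slobodeckijDensity, mul_div_cancel₀ _ hd.ne']
    _ ≤ δ ^ (1 + 2 * s) * slobodeckijDensity s φ (x, y) := by
        gcongr
        exact slobodeckijDensity_nonneg _

variable [NormedSpace ℝ E] [CompleteSpace E]

theorem norm_setAverage_Icc_sub_sq_le (hs : 0 ≤ 1 + 2 * s) (hφ : ContinuousOn φ (Icc a b))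
    (hint : IntegrableOn (slobodeckijDensity s φ) (Icc a b ×ˢ Icc a b))
    {p q c e : ℝ} (hpq : p < q) (hcp : c ≤ p) (hqe : q ≤ e) (hK : Icc c e ⊆ Icc a b) :
    ‖(⨍ x in Icc p q, φ x) - ⨍ x in Icc c e, φ x‖ ^ 2 ≤
      (e - c) ^ (1 + 2 * s) / ((q - p) * (e - c)) *
        ∫ z in Icc a b ×ˢ Icc a b, slobodeckijDensity s φ z := by
  have hce : c < e := by linarith
  have hJK : Icc p q ⊆ Icc c e := Icc_subset_Icc hcp hqe
  have hJK2 : Icc p q ×ˢ Icc c e ⊆ Icc a b ×ˢ Icc a b := prod_mono (hJK.trans hK) hK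
  have hcompact : IsCompact (Icc p q ×ˢ Icc c e) := isCompact_Icc.prod isCompact_Icc
  have hdiff : ContinuousOn (fun z : ℝ × ℝ => φ z.1 - φ z.2) (Icc p q ×ˢ Icc c e) :=
    ((hφ.mono (hJK.trans hK)).comp continuousOn_fst fun z hz => hz.1).sub
      ((hφ.mono hK).comp continuousOn_snd fun z hz => hz.2)
  have : NeZero (volume.restrict (Icc p q)) := ⟨by simp [hpq]⟩
  have : NeZero (volume.restrict (Icc c e)) := ⟨by simp [hce]⟩
  have : IsFiniteMeasure (volume.restrict (Icc p q ×ˢ Icc c e)) :=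
    isFiniteMeasure_restrict.2 hcompact.measure_lt_top.ne
  have hvol : (volume (Icc p q ×ˢ Icc c e)).toReal = (q - p) * (e - c) := by
    rw [Measure.volume_eq_prod, Measure.prod_prod, Real.volume_Icc, Real.volume_Icc,
      ENNReal.toReal_mul, ENNReal.toReal_ofReal (by linarith),
      ENNReal.toReal_ofReal (by linarith)]
  have hpointwise : ∀ z ∈ Icc p q ×ˢ Icc c e,
      ‖φ z.1 - φ z.2‖ ^ 2 ≤ (e - c) ^ (1 + 2 * s) * slobodeckijDensity s φ z := by
    rintro ⟨x, y⟩ ⟨hx, hy⟩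
    have hx := hJK hx
    refine norm_sub_sq_le_mul_slobodeckijDensity hs (abs_sub_le_iff.2 ⟨?_, ?_⟩) <;>
      linarith [hx.1, hx.2, hy.1, hy.2]
  calc ‖(⨍ x in Icc p q, φ x) - ⨍ x in Icc c e, φ x‖ ^ 2
      = ‖⨍ z in Icc p q ×ˢ Icc c e, (φ z.1 - φ z.2)‖ ^ 2 := by
        rw [average_sub_average_eq_average_prod (μ := volume.restrict (Icc p q))
          (ν := volume.restrict (Icc c e))
          ((hφ.mono (hJK.trans hK)).integrableOn_Icc) ((hφ.mono hK).integrableOn_Icc),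
          Measure.prod_restrict, ← Measure.volume_eq_prod]
    _ ≤ ⨍ z in Icc p q ×ˢ Icc c e, ‖φ z.1 - φ z.2‖ ^ 2 :=
        norm_average_sq_le (hdiff.integrableOn_compact hcompact)
          ((hdiff.norm.pow 2).integrableOn_compact hcompact)
    _ = ((q - p) * (e - c))⁻¹ * ∫ z in Icc p q ×ˢ Icc c e, ‖φ z.1 - φ z.2‖ ^ 2 := by
        rw [setAverage_eq, measureReal_def, hvol, smul_eq_mul]
    _ ≤ ((q - p) * (e - c))⁻¹ *
          ∫ z in Icc p q ×ˢ Icc c e, (e - c) ^ (1 + 2 * s) * slobodeckijDensity s φ z := by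
        refine mul_le_mul_of_nonneg_left ?_ (by positivity)
        exact setIntegral_mono_on ((hdiff.norm.pow 2).integrableOn_compact hcompact)
          ((hint.mono_set hJK2).const_mul _) (measurableSet_Icc.prod measurableSet_Icc)
          hpointwise
    _ ≤ ((q - p) * (e - c))⁻¹ *
          ((e - c) ^ (1 + 2 * s) * ∫ z in Icc a b ×ˢ Icc a b, slobodeckijDensity s φ z) := by
        rw [integral_const_mul]
        refine mul_le_mul_of_nonneg_left (mul_le_mul_of_nonneg_left ?_ (by positivity))
          (by positivity)
        exact setIntegral_mono_set hint (Eventually.of_forall slobodeckijDensity_nonneg)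
          hJK2.eventuallyLE
    _ = _ := by ring

theorem dist_setAverage_Icc_le_of_dyadic (hs : 1 / 2 < s) (hab : a < b)
    (hφ : ContinuousOn φ (Icc a b))
    (hint : IntegrableOn (slobodeckijDensity s φ) (Icc a b ×ˢ Icc a b))
    {l m : ℕ → ℝ} (hl : Monotone l) (hm : Antitone m) (hl0 : l 0 = a) (hm0 : m 0 = b)
    (hlen : ∀ n, m n - l n = (b - a) * 2⁻¹ ^ n) {x : ℝ} (hx : ∀ n, x ∈ Icc (l n) (m n)) :
    dist (⨍ y in Icc a b, φ y) (φ x) ≤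
      √(2 * ∫ z in Icc a b ×ˢ Icc a b, slobodeckijDensity s φ z) * (b - a) ^ (s - 1 / 2) /
        (1 - 2⁻¹ ^ (s - 1 / 2)) := by
  set I := ∫ z in Icc a b ×ˢ Icc a b, slobodeckijDensity s φ z
  set r : ℝ := 2⁻¹ ^ (s - 1 / 2)
  have hba : 0 < b - a := sub_pos.2 hab
  have hI : 0 ≤ I := integral_nonneg slobodeckijDensity_nonneg
  have hlen_pos : ∀ n, 0 < m n - l n := fun n => hlen n ▸ by positivity
  have hsub : ∀ n, Icc (l n) (m n) ⊆ Icc a b := fun n =>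
    hl0 ▸ hm0 ▸ Icc_subset_Icc (hl n.zero_le) (hm n.zero_le)
  have hstep : ∀ n, dist (⨍ y in Icc (l n) (m n), φ y) (⨍ y in Icc (l (n + 1)) (m (n + 1)), φ y)
      ≤ √(2 * I) * (b - a) ^ (s - 1 / 2) * r ^ n := by
    intro n
    have hhalf : m (n + 1) - l (n + 1) = (m n - l n) / 2 := by
      rw [hlen, hlen, pow_succ]
      ring
    have hsq := norm_setAverage_Icc_sub_sq_le (by linarith) hφ hint
      (sub_pos.1 (hlen_pos (n + 1))) (hl n.le_succ) (hm n.le_succ) (hsub n)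
    rw [hhalf, rpow_div_half_mul_self (hlen_pos n), hlen n,
      Real.mul_rpow hba.le (by positivity), ← Real.rpow_pow_comm (by norm_num)] at hsq
    rw [dist_comm, dist_eq_norm,
      ← pow_le_pow_iff_left₀ (norm_nonneg _) (by positivity) two_ne_zero]
    refine hsq.trans_eq ?_
    rw [mul_pow, mul_pow, mul_pow, Real.sq_sqrt (by positivity)]
    ring
  have htend : Tendsto (fun n => ⨍ y in Icc (l n) (m n), φ y) atTop (𝓝 (φ x)) := by
    have hshrink : Tendsto (fun n => m n - l n) atTop (𝓝 0) := by
      simpa [hlen] using (tendsto_pow_atTop_nhds_zero_of_lt_one (r := (2 : ℝ)⁻¹)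
        (by norm_num) (by norm_num)).const_mul (b - a)
    refine (hφ x (hsub 0 (hx 0))).tendsto_setAverage ?_ hsub (fun _ => measurableSet_Icc)
      (fun n => by simpa [Real.volume_Icc] using hlen_pos n) (fun n => by simp)
      (fun n => (hφ.mono (hsub n)).integrableOn_Icc)
    refine ((tendsto_closedBall_smallSets x).comp hshrink).smallSets_mono
      (Eventually.of_forall fun n y hy => ?_)
    rw [Function.comp_apply, Metric.mem_closedBall, Real.dist_eq, abs_sub_le_iff]
    constructor <;> linarith [hy.1, hy.2, (hx n).1, (hx n).2]
  simpa [hl0, hm0] using dist_le_of_le_geometric_of_tendsto₀ r _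
    (Real.rpow_lt_one (by norm_num) (by norm_num) (by linarith)) hstep htend

end Slobodeckij

/-- Garsia–Rodemich–Rumsey consequence: for `1/2 < s < 1` and continuous `φ` on `[a,b]` with
finite double integral, `|φ(a)-φ(b)|² ≤ D_s (b-a)^{2s-1} ∬ |φ(x)-φ(y)|²/|x-y|^{1+2s}` with
`D_s = (16(2s+1)/(2s-1))²`. -/
theorem garsia_rodemich_rumsey (s : ℝ) (hs : 1 / 2 < s) (hs1 : s < 1) (a b : ℝ) (hab : a < b)
    (φ : ℝ → ℂ) (hcont : ContinuousOn φ (Set.Icc a b))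
    (hint : IntegrableOn
      (fun p : ℝ × ℝ => ‖φ p.1 - φ p.2‖ ^ 2 / |p.1 - p.2| ^ (1 + 2 * s))
      (Set.Icc a b ×ˢ Set.Icc a b)) :
    ‖φ a - φ b‖ ^ 2 ≤
      (16 * (2 * s + 1) / (2 * s - 1)) ^ 2 * (b - a) ^ (2 * s - 1) *
        ∫ x in Set.Icc a b, ∫ y in Set.Icc a b,
          ‖φ x - φ y‖ ^ 2 / |x - y| ^ (1 + 2 * s) := by
  have hint' : IntegrableOn (slobodeckijDensity s φ) (Icc a b ×ˢ Icc a b) := hint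
  have hiter : ∫ x in Icc a b, ∫ y in Icc a b, ‖φ x - φ y‖ ^ 2 / |x - y| ^ (1 + 2 * s) =
      ∫ z in Icc a b ×ˢ Icc a b, slobodeckijDensity s φ z := (setIntegral_prod _ hint').symm
  have hI : 0 ≤ ∫ z in Icc a b ×ˢ Icc a b, slobodeckijDensity s φ z :=
    integral_nonneg slobodeckijDensity_nonneg
  have hba : 0 < b - a := sub_pos.2 hab
  set h : ℕ → ℝ := fun n => (b - a) * 2⁻¹ ^ n
  have hh : Antitone h := fun _ _ hnk =>
    mul_le_mul_of_nonneg_left (pow_le_pow_of_le_one (by norm_num) (by norm_num) hnk) hba.le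
  have hh0 : ∀ n, 0 ≤ h n := fun n => by positivity
  have hleft := dist_setAverage_Icc_le_of_dyadic hs hab hcont hint' (l := fun _ => a)
    (m := fun n => a + h n) monotone_const (hh.const_add a) rfl
    (by simp [h]) (fun n => by ring) (x := a) fun n => ⟨le_rfl, by linarith [hh0 n]⟩
  have hright := dist_setAverage_Icc_le_of_dyadic hs hab hcont hint' (l := fun n => b - h n)
    (m := fun _ => b) (fun _ _ hnk => sub_le_sub_left (hh hnk) b) antitone_const (by simp [h])
    rfl (fun n => by ring) (x := b) fun n => ⟨by linarith [hh0 n], le_rfl⟩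
  rw [hiter]
  calc ‖φ a - φ b‖ ^ 2 ≤ (2 * (√(2 * ∫ z in Icc a b ×ˢ Icc a b, slobodeckijDensity s φ z) *
      (b - a) ^ (s - 1 / 2) / (1 - 2⁻¹ ^ (s - 1 / 2)))) ^ 2 := by
        rw [← dist_eq_norm]
        gcongr
        linarith [dist_triangle_left (φ a) (φ b) (⨍ y in Icc a b, φ y)]
    _ ≤ _ := sq_two_mul_sqrt_mul_rpow_div_one_sub_le hs hs1 hI hba
end

section
/- (Fractional Poincaré–Sobolev on an interval) Let 1/2 < s < 1. There is a constant C_s such that for every bounded interval Q ⊂ ℝ and every continuous ψ on Q̄ with ∫_Q ψ dx = 0 and finite seminorm t_Q[ψ] := a_{1,s} ∫∫_{Q×Q} |ψ(x)-ψ(y)|²/|x-y|^{1+2s} dx dy, one has sup_Q |ψ|² ≤ C_s |Q|^{2s-1} t_Q[ψ]. -/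
/-!
Campanato's dyadic argument. Let `[a, b] = I₀ ⊇ I₁ ⊇ ⋯` be the dyadic intervals containing `x`,
`|I_k| = 2⁻ᵏ (b - a)`, and let `A_k` be the mean of `ψ` over `I_k`; then `A₀ = 0` by the mean-zero
condition and `A_k → ψ x` by continuity. By Jensen's inequality on `I_{k+1} × I_k`, where
`|u - v| ≤ |I_k|`, the increment `‖A_{k+1} - A_k‖²` is at most
`|I_k|^{1+2s} / (|I_{k+1}| |I_k|) ∬ ‖ψ u - ψ v‖² / |u - v|^{1+2s} = 2 |I_k|^{2s-1} ∬ ⋯`.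
For `s > 1/2` the increments decay geometrically with ratio `2^{1/2 - s}`, and summing them
bounds `‖ψ x‖`.
-/

open MeasureTheory Set Filter Topology
open scoped ENNReal

section Averages

variable {α E : Type*} [MeasurableSpace α] {μ : Measure α} [NormedAddCommGroup E]
  [NormedSpace ℝ E] {f : α → E} {s t : Set α}

theorem setAverage_sub_setAverage_eq_setAverage_prod [SFinite μ] (hs₀ : μ s ≠ 0) (hs : μ s ≠ ∞)
    (ht₀ : μ t ≠ 0) (ht : μ t ≠ ∞) (hfs : IntegrableOn f s μ) (hft : IntegrableOn f t μ) :
    ⨍ x in s, f x ∂μ - ⨍ y in t, f y ∂μ = ⨍ z in s ×ˢ t, f z.1 - f z.2 ∂μ.prod μ := by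
  have : IsFiniteMeasure (μ.restrict s) := isFiniteMeasure_restrict.2 hs
  have : IsFiniteMeasure (μ.restrict t) := isFiniteMeasure_restrict.2 ht
  have hμs : μ.real s ≠ 0 := (ENNReal.toReal_pos hs₀ hs).ne'
  have hμt : μ.real t ≠ 0 := (ENNReal.toReal_pos ht₀ ht).ne'
  rw [setAverage_eq, setAverage_eq, setAverage_eq, ← Measure.prod_restrict,
    integral_sub (hfs.comp_fst _) (hft.comp_snd _), integral_fun_fst, integral_fun_snd,
    measureReal_prod_prod, measureReal_restrict_apply_univ, measureReal_restrict_apply_univ,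
    smul_sub, smul_smul, smul_smul]
  congr 2 <;> field_simp

variable [CompleteSpace E]

theorem norm_setAverage_sub_le_of_forall_mem {c : E} {ε : ℝ} (hs₀ : μ s ≠ 0) (hs : μ s ≠ ∞)
    (hf : IntegrableOn f s μ) (hε : ∀ y ∈ s, ‖f y - c‖ ≤ ε) :
    ‖⨍ y in s, f y ∂μ - c‖ ≤ ε := by
  have hμ : 0 < μ.real s := ENNReal.toReal_pos hs₀ hs
  have hint : ‖∫ y in s, f y - c ∂μ‖ ≤ ε * μ.real s :=
    norm_setIntegral_le_of_norm_le_const hs.lt_top hε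
  rw [← setAverage_const hs₀ hs c, setAverage_eq, setAverage_eq, ← smul_sub,
    ← integral_sub hf (integrableOn_const hs), norm_smul, Real.norm_of_nonneg (by positivity)]
  calc (μ.real s)⁻¹ * ‖∫ y in s, f y - c ∂μ‖ ≤ (μ.real s)⁻¹ * (ε * μ.real s) := by gcongr
    _ = ε := by field_simp

theorem sq_norm_setAverage_sub_setAverage_le [SFinite μ] (hs₀ : μ s ≠ 0) (hs : μ s ≠ ∞)
    (ht₀ : μ t ≠ 0) (ht : μ t ≠ ∞) (hfs : IntegrableOn f s μ) (hft : IntegrableOn f t μ)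
    (hf2 : IntegrableOn (fun z : α × α => ‖f z.1 - f z.2‖ ^ 2) (s ×ˢ t) (μ.prod μ)) :
    ‖⨍ x in s, f x ∂μ - ⨍ y in t, f y ∂μ‖ ^ 2 ≤
      ⨍ z in s ×ˢ t, ‖f z.1 - f z.2‖ ^ 2 ∂μ.prod μ := by
  have hconvex : ConvexOn ℝ univ (fun v : E => ‖v‖ ^ 2) :=
    convexOn_univ_norm.pow (fun v _ => norm_nonneg v) 2
  rw [setAverage_sub_setAverage_eq_setAverage_prod hs₀ hs ht₀ ht hfs hft]
  refine hconvex.map_set_average_le (by fun_prop) isClosed_univ ?_ ?_ (by simp) ?_ hf2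
  · simpa [Measure.prod_prod] using ⟨hs₀, ht₀⟩
  · simpa [Measure.prod_prod] using ENNReal.mul_ne_top hs ht
  · rw [IntegrableOn, ← Measure.prod_restrict]
    have : IsFiniteMeasure (μ.restrict s) := isFiniteMeasure_restrict.2 hs
    have : IsFiniteMeasure (μ.restrict t) := isFiniteMeasure_restrict.2 ht
    exact (hfs.comp_fst _).sub (hft.comp_snd _)

end Averages

theorem le_rpow_mul_div_rpow {x r ℓ β : ℝ} (hx : 0 ≤ x) (hβ : 0 ≤ β) (hr : 0 ≤ r) (hrℓ : r ≤ ℓ)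
    (hx₀ : r = 0 → x = 0) : x ≤ ℓ ^ β * (x / r ^ β) := by
  rcases hr.eq_or_lt with rfl | hr
  · rw [hx₀ rfl]
    simp
  calc x = r ^ β * (x / r ^ β) := by field_simp
    _ ≤ ℓ ^ β * (x / r ^ β) := by gcongr

theorem rpow_div_two_pow {L : ℝ} (hL : 0 ≤ L) (p : ℝ) (k : ℕ) :
    (L / 2 ^ k) ^ p = L ^ p * ((2 : ℝ) ^ (-p)) ^ k := by
  rw [Real.div_rpow hL (by positivity), ← Real.rpow_pow_comm (by norm_num),
    Real.rpow_neg (by norm_num), inv_pow, div_eq_mul_inv]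

section Interval

variable {E : Type*} [NormedAddCommGroup E] [NormedSpace ℝ E] [CompleteSpace E] {ψ : ℝ → E}

theorem sq_norm_setAverage_Icc_sub_setAverage_Icc_le {a b c d c' d' β : ℝ} (hβ : 0 ≤ β)
    (hψ : ContinuousOn ψ (Icc a b))
    (hg : IntegrableOn (fun z : ℝ × ℝ => ‖ψ z.1 - ψ z.2‖ ^ 2 / |z.1 - z.2| ^ β)
      (Icc a b ×ˢ Icc a b))
    (hac : a ≤ c) (hcc' : c ≤ c') (hc'd' : c' < d') (hd'd : d' ≤ d) (hdb : d ≤ b) :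
    ‖(⨍ y in Icc c' d', ψ y) - ⨍ y in Icc c d, ψ y‖ ^ 2 ≤
      (d - c) ^ β / ((d' - c') * (d - c)) *
        ∫ z in Icc a b ×ˢ Icc a b, ‖ψ z.1 - ψ z.2‖ ^ 2 / |z.1 - z.2| ^ β := by
  set g := fun z : ℝ × ℝ => ‖ψ z.1 - ψ z.2‖ ^ 2 / |z.1 - z.2| ^ β
  have hJI : Icc c' d' ⊆ Icc c d := Icc_subset_Icc hcc' hd'd
  have hIQ : Icc c d ⊆ Icc a b := Icc_subset_Icc hac hdb
  have hJIQ : Icc c' d' ×ˢ Icc c d ⊆ Icc a b ×ˢ Icc a b := prod_mono (hJI.trans hIQ) hIQ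
  have hcd : c < d := by linarith
  have hψQ : IntegrableOn ψ (Icc a b) := hψ.integrableOn_compact isCompact_Icc
  have hΔ : ContinuousOn (fun z : ℝ × ℝ => ‖ψ z.1 - ψ z.2‖ ^ 2) (Icc c' d' ×ˢ Icc c d) :=
    (((hψ.comp continuousOn_fst fun z hz => (hJIQ hz).1).sub
      (hψ.comp continuousOn_snd fun z hz => (hJIQ hz).2)).norm).pow 2
  have hpoint : ∀ z ∈ Icc c' d' ×ˢ Icc c d, ‖ψ z.1 - ψ z.2‖ ^ 2 ≤ (d - c) ^ β * g z := by
    rintro ⟨u, v⟩ ⟨⟨hu₁, hu₂⟩, ⟨hv₁, hv₂⟩⟩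
    refine le_rpow_mul_div_rpow (by positivity) hβ (abs_nonneg _)
      (abs_sub_le_iff.2 ⟨by linarith, by linarith⟩) fun huv => ?_
    obtain rfl : u = v := by simpa [sub_eq_zero] using huv
    simp
  have hvol : (volume.prod volume).real (Icc c' d' ×ˢ Icc c d) = (d' - c') * (d - c) := by
    rw [measureReal_prod_prod, Real.volume_real_Icc_of_le hc'd'.le,
      Real.volume_real_Icc_of_le hcd.le]
  have hw : 0 < (d' - c') * (d - c) := mul_pos (sub_pos.2 hc'd') (sub_pos.2 hcd)
  calc ‖(⨍ y in Icc c' d', ψ y) - ⨍ y in Icc c d, ψ y‖ ^ 2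
      ≤ ⨍ z in Icc c' d' ×ˢ Icc c d, ‖ψ z.1 - ψ z.2‖ ^ 2 ∂volume.prod volume :=
        sq_norm_setAverage_sub_setAverage_le (by simpa using hc'd') (by simp) (by simpa using hcd)
          (by simp) (hψQ.mono_set (hJI.trans hIQ)) (hψQ.mono_set hIQ)
          (hΔ.integrableOn_compact (isCompact_Icc.prod isCompact_Icc))
    _ ≤ ((d' - c') * (d - c))⁻¹ * ((d - c) ^ β * ∫ z in Icc c' d' ×ˢ Icc c d, g z) := by
        rw [setAverage_eq, hvol, smul_eq_mul]
        refine mul_le_mul_of_nonneg_left ?_ (inv_nonneg.2 hw.le)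
        rw [← integral_const_mul]
        exact setIntegral_mono_on (hΔ.integrableOn_compact (isCompact_Icc.prod isCompact_Icc))
          ((hg.mono_set hJIQ).const_mul _) (measurableSet_Icc.prod measurableSet_Icc) hpoint
    _ ≤ ((d' - c') * (d - c))⁻¹ * ((d - c) ^ β * ∫ z in Icc a b ×ˢ Icc a b, g z) := by
        gcongr ?_ * (_ * ?_)
        exact setIntegral_mono_set hg (.of_forall fun z => by positivity) hJIQ.eventuallyLE
    _ = _ := by ring

theorem tendsto_setAverage_Icc_of_continuousWithinAt {ι : Type*} {l : Filter ι} {Q : Set ℝ}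
    {c d : ι → ℝ} {x : ℝ} (hψ : ContinuousWithinAt ψ Q x) (hcd : ∀ i, c i < d i)
    (hx : ∀ i, x ∈ Icc (c i) (d i)) (hQ : ∀ i, Icc (c i) (d i) ⊆ Q)
    (hint : ∀ i, IntegrableOn ψ (Icc (c i) (d i))) (hlen : Tendsto (fun i => d i - c i) l (𝓝 0)) :
    Tendsto (fun i => ⨍ y in Icc (c i) (d i), ψ y) l (𝓝 (ψ x)) := by
  refine Metric.tendsto_nhds.2 fun ε hε => ?_
  obtain ⟨δ, hδ, hψδ⟩ := Metric.continuousWithinAt_iff.1 hψ (ε / 2) (half_pos hε)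
  filter_upwards [(tendsto_order.1 hlen).2 δ hδ] with i hi
  have hclose : ∀ y ∈ Icc (c i) (d i), ‖ψ y - ψ x‖ ≤ ε / 2 := fun y hy => by
    rw [← dist_eq_norm]
    refine (hψδ (hQ i hy) ?_).le
    rw [Real.dist_eq, abs_sub_lt_iff]
    constructor <;> linarith [(hx i).1, (hx i).2, hy.1, hy.2]
  rw [dist_eq_norm]
  exact (norm_setAverage_sub_le_of_forall_mem (by simpa using hcd i) (by simp) (hint i)
    hclose).trans_lt (half_lt_self hε)

end Interval

noncomputable def halfContaining (x : ℝ) (I : ℝ × ℝ) : ℝ × ℝ :=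
  if x ≤ (I.1 + I.2) / 2 then (I.1, (I.1 + I.2) / 2) else ((I.1 + I.2) / 2, I.2)

theorem halfContaining_spec {x : ℝ} {I : ℝ × ℝ} (h₁ : I.1 ≤ x) (h₂ : x ≤ I.2) :
    I.1 ≤ (halfContaining x I).1 ∧ (halfContaining x I).1 ≤ x ∧ x ≤ (halfContaining x I).2 ∧
      (halfContaining x I).2 ≤ I.2 ∧
      (halfContaining x I).2 - (halfContaining x I).1 = (I.2 - I.1) / 2 := by
  unfold halfContaining
  split_ifs with hmid
  · exact ⟨le_rfl, h₁, hmid, by linarith, by ring⟩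
  · exact ⟨by linarith, by linarith, h₂, le_rfl, by ring⟩

noncomputable def dyadicNest (x a b : ℝ) (k : ℕ) : ℝ × ℝ := (halfContaining x)^[k] (a, b)

theorem dyadicNest_succ (x a b : ℝ) (k : ℕ) :
    dyadicNest x a b (k + 1) = halfContaining x (dyadicNest x a b k) :=
  Function.iterate_succ_apply' _ _ _

theorem dyadicNest_spec {x a b : ℝ} (hx : x ∈ Icc a b) (k : ℕ) :
    a ≤ (dyadicNest x a b k).1 ∧ (dyadicNest x a b k).1 ≤ x ∧ x ≤ (dyadicNest x a b k).2 ∧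
      (dyadicNest x a b k).2 ≤ b ∧
      (dyadicNest x a b k).2 - (dyadicNest x a b k).1 = (b - a) / 2 ^ k := by
  induction k with
  | zero => exact ⟨le_rfl, hx.1, hx.2, le_rfl, by simp [dyadicNest]⟩
  | succ k ih =>
    obtain ⟨ha, h₁, h₂, hb, hlen⟩ := ih
    obtain ⟨g₁, g₂, g₃, g₄, glen⟩ := halfContaining_spec h₁ h₂
    rw [dyadicNest_succ]
    exact ⟨ha.trans g₁, g₂, g₃, g₄.trans hb, by rw [glen, hlen, pow_succ]; ring⟩

section DyadicAverage

variable {E : Type*} [NormedAddCommGroup E] [NormedSpace ℝ E] [CompleteSpace E] {ψ : ℝ → E}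
  {s a b x : ℝ}

noncomputable def dyadicAverage (ψ : ℝ → E) (x a b : ℝ) (k : ℕ) : E :=
  ⨍ y in Icc (dyadicNest x a b k).1 (dyadicNest x a b k).2, ψ y

theorem dist_dyadicAverage_succ_le (hs : 1 / 2 < s) (hab : a < b)
    (hψ : ContinuousOn ψ (Icc a b))
    (hg : IntegrableOn (fun z : ℝ × ℝ => ‖ψ z.1 - ψ z.2‖ ^ 2 / |z.1 - z.2| ^ (1 + 2 * s))
      (Icc a b ×ˢ Icc a b)) (hx : x ∈ Icc a b) (k : ℕ) :
    dist (dyadicAverage ψ x a b k) (dyadicAverage ψ x a b (k + 1)) ≤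
      √(2 * (b - a) ^ (2 * s - 1) *
          ∫ z in Icc a b ×ˢ Icc a b, ‖ψ z.1 - ψ z.2‖ ^ 2 / |z.1 - z.2| ^ (1 + 2 * s)) *
        √((2 : ℝ) ^ (1 - 2 * s)) ^ k := by
  set T := ∫ z in Icc a b ×ˢ Icc a b, ‖ψ z.1 - ψ z.2‖ ^ 2 / |z.1 - z.2| ^ (1 + 2 * s)
  have hT : 0 ≤ T := integral_nonneg fun z => by positivity
  have hℓ : 0 < (b - a) / 2 ^ k := div_pos (sub_pos.2 hab) (by positivity)
  obtain ⟨ha, h₁, h₂, hb, hlen⟩ := dyadicNest_spec hx k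
  obtain ⟨g₁, -, -, g₄, glen⟩ := halfContaining_spec h₁ h₂
  rw [← dyadicNest_succ] at g₁ g₄ glen
  have key : ‖dyadicAverage ψ x a b (k + 1) - dyadicAverage ψ x a b k‖ ^ 2 ≤ _ * T :=
    sq_norm_setAverage_Icc_sub_setAverage_Icc_le (by linarith) hψ hg ha g₁ (by linarith) g₄ hb
  have hpow : ((b - a) / 2 ^ k) ^ (1 + 2 * s) =
      ((b - a) / 2 ^ k) ^ 2 * ((b - a) ^ (2 * s - 1) * ((2 : ℝ) ^ (1 - 2 * s)) ^ k) := by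
    rw [show 1 + 2 * s = 2 + (2 * s - 1) by ring, Real.rpow_add hℓ, Real.rpow_two,
      rpow_div_two_pow (sub_nonneg.2 hab.le), neg_sub]
  rw [glen, hlen, hpow] at key
  have hK : 0 ≤ 2 * (b - a) ^ (2 * s - 1) * T :=
    mul_nonneg (mul_nonneg two_pos.le (Real.rpow_nonneg (sub_nonneg.2 hab.le) _)) hT
  rw [dist_comm, dist_eq_norm]
  refine (pow_le_pow_iff_left₀ (norm_nonneg _) (by positivity) two_ne_zero).1 (key.trans_eq ?_)
  rw [mul_pow, ← pow_mul, mul_comm k, pow_mul, Real.sq_sqrt hK, Real.sq_sqrt (by positivity)]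
  have hba : b - a ≠ 0 := (sub_pos.2 hab).ne'
  field_simp

theorem tendsto_dyadicAverage (hab : a < b) (hψ : ContinuousOn ψ (Icc a b)) (hx : x ∈ Icc a b) :
    Tendsto (dyadicAverage ψ x a b) atTop (𝓝 (ψ x)) := by
  have hlen : ∀ k, (dyadicNest x a b k).2 - (dyadicNest x a b k).1 = (b - a) / 2 ^ k := fun k =>
    (dyadicNest_spec hx k).2.2.2.2
  have hsub : ∀ k, Icc (dyadicNest x a b k).1 (dyadicNest x a b k).2 ⊆ Icc a b := fun k =>
    Icc_subset_Icc (dyadicNest_spec hx k).1 (dyadicNest_spec hx k).2.2.2.1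
  refine tendsto_setAverage_Icc_of_continuousWithinAt (hψ x hx)
    (fun k => sub_pos.1 ((hlen k).symm ▸ div_pos (sub_pos.2 hab) (by positivity)))
    (fun k => ⟨(dyadicNest_spec hx k).2.1, (dyadicNest_spec hx k).2.2.1⟩) hsub
    (fun k => (hψ.integrableOn_compact isCompact_Icc).mono_set (hsub k))
    ((tendsto_congr hlen).2 ?_)
  exact tendsto_const_nhds.div_atTop (tendsto_pow_atTop_atTop_of_one_lt one_lt_two)

theorem sq_norm_le_of_setIntegral_Icc_eq_zero (hs : 1 / 2 < s) (hab : a < b)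
    (hψ : ContinuousOn ψ (Icc a b)) (hmean : ∫ y in Icc a b, ψ y = 0)
    (hg : IntegrableOn (fun z : ℝ × ℝ => ‖ψ z.1 - ψ z.2‖ ^ 2 / |z.1 - z.2| ^ (1 + 2 * s))
      (Icc a b ×ˢ Icc a b)) (hx : x ∈ Icc a b) :
    ‖ψ x‖ ^ 2 ≤ 2 / (1 - √((2 : ℝ) ^ (1 - 2 * s))) ^ 2 * (b - a) ^ (2 * s - 1) *
      ∫ z in Icc a b ×ˢ Icc a b, ‖ψ z.1 - ψ z.2‖ ^ 2 / |z.1 - z.2| ^ (1 + 2 * s) := by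
  set T := ∫ z in Icc a b ×ˢ Icc a b, ‖ψ z.1 - ψ z.2‖ ^ 2 / |z.1 - z.2| ^ (1 + 2 * s)
  set r := √((2 : ℝ) ^ (1 - 2 * s))
  have hr : r < 1 := by
    rw [Real.sqrt_lt' one_pos, one_pow]
    exact Real.rpow_lt_one_of_one_lt_of_neg one_lt_two (by linarith)
  have hK : 0 ≤ 2 * (b - a) ^ (2 * s - 1) * T :=
    mul_nonneg (mul_nonneg two_pos.le (Real.rpow_nonneg (sub_nonneg.2 hab.le) _))
      (integral_nonneg fun z => by positivity)
  have hA₀ : dyadicAverage ψ x a b 0 = 0 := by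
    simp [dyadicAverage, dyadicNest, setAverage_eq, hmean]
  have hbound := dist_le_of_le_geometric_of_tendsto₀ r _ hr
    (dist_dyadicAverage_succ_le hs hab hψ hg hx) (tendsto_dyadicAverage hab hψ hx)
  rw [hA₀, dist_zero_left] at hbound
  calc ‖ψ x‖ ^ 2 ≤ (√(2 * (b - a) ^ (2 * s - 1) * T) / (1 - r)) ^ 2 :=
        pow_le_pow_left₀ (norm_nonneg _) hbound 2
    _ = _ := by rw [div_pow, Real.sq_sqrt hK]; ring

end DyadicAverage

theorem fractional_poincare_sobolev_general (s : ℝ) (hs : 1 / 2 < s)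
    (a1s : ℝ) (ha1s : 0 < a1s) :
    ∃ C : ℝ, ∀ a b : ℝ, a < b → ∀ ψ : ℝ → ℂ, ContinuousOn ψ (Set.Icc a b) →
      (∫ x in Set.Icc a b, ψ x) = 0 →
      IntegrableOn (fun p : ℝ × ℝ => ‖ψ p.1 - ψ p.2‖ ^ 2 / |p.1 - p.2| ^ (1 + 2 * s))
        (Set.Icc a b ×ˢ Set.Icc a b) →
      ∀ x ∈ Set.Icc a b,
        ‖ψ x‖ ^ 2 ≤
          C * (b - a) ^ (2 * s - 1) *
            (a1s * ∫ u in Set.Icc a b, ∫ v in Set.Icc a b,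
              ‖ψ u - ψ v‖ ^ 2 / |u - v| ^ (1 + 2 * s)) := by
  refine ⟨2 / (1 - √((2 : ℝ) ^ (1 - 2 * s))) ^ 2 / a1s, fun a b hab ψ hψ hmean hg x hx => ?_⟩
  rw [← setIntegral_prod _ hg, ← Measure.volume_eq_prod]
  calc ‖ψ x‖ ^ 2 ≤ _ := sq_norm_le_of_setIntegral_Icc_eq_zero hs hab hψ hmean hg hx
    _ = _ := by field_simp

/-- Fractional Poincaré–Sobolev inequality on an interval: for `1/2 < s < 1` there is a
constant `C_s` such that every continuous mean-zero `ψ` on a bounded interval `Q = [a,b]`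
with finite seminorm `t_Q[ψ] = a_{1,s} ∬_{Q×Q} |ψ(x)-ψ(y)|²/|x-y|^{1+2s}` satisfies
`sup_Q |ψ|² ≤ C_s |Q|^{2s-1} t_Q[ψ]`. -/
theorem fractional_poincare_sobolev (s : ℝ) (hs : 1 / 2 < s) (hs1 : s < 1)
    (a1s : ℝ) (ha1s : 0 < a1s) :
    ∃ C : ℝ, ∀ a b : ℝ, a < b → ∀ ψ : ℝ → ℂ, ContinuousOn ψ (Set.Icc a b) →
      (∫ x in Set.Icc a b, ψ x) = 0 →
      IntegrableOn (fun p : ℝ × ℝ => ‖ψ p.1 - ψ p.2‖ ^ 2 / |p.1 - p.2| ^ (1 + 2 * s))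
        (Set.Icc a b ×ˢ Set.Icc a b) →
      ∀ x ∈ Set.Icc a b,
        ‖ψ x‖ ^ 2 ≤
          C * (b - a) ^ (2 * s - 1) *
            (a1s * ∫ u in Set.Icc a b, ∫ v in Set.Icc a b,
              ‖ψ u - ψ v‖ ^ 2 / |u - v| ^ (1 + 2 * s)) :=
  fractional_poincare_sobolev_general s hs a1s ha1s
end
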